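/- arXiv:2603.01793 — 2 statements merged into one kernel-verified Lean document; each statement's English description precedes it below -/
import Mathlib

section
/- Let k be an integer with k ≥ 2 and ΛQ(y) = 2k·y^k/(1 + y^{2k}). There exists a constant C > 0, depending only on k, such that for all scales 0 < λ_in ≤ λ_out: ( ∫_0^∞ r^{−6}·(r/λ_in + 1)·(r + λ_in)·ΛQ(r/λ_in)²·ΛQ(r/λ_out)²· r dr )^{1/2} ≤ C·λ_in^{−3/2}·(λ_in/λ_out)^k. -/
/-!
Substituting `r = λ_in s` pulls out `λ_in⁻³` and leaves `∫ (s + 1)² ΛQ(s)² ΛQ(t s)² s⁻⁵ ds` with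
`t = λ_in / λ_out`. Since `ΛQ(y) ≤ 2k min(y^k, y^{-k})`, this integrand is at most
`64 k⁴ t^{2k} s^{4k-5}` for `s ≤ 1` and `64 k⁴ t^{2k} s⁻³` for `s > 1`; both majorants are integrable
because `k ≥ 2`, and the bound follows with `C = 8 k²`.
-/

open MeasureTheory Set

/-- `ΛQ(y) = y Q'(y) = 2k y^k/(1+y^{2k})`. -/
noncomputable def LamQ (k : ℕ) (y : ℝ) : ℝ := 2 * k * y ^ k / (1 + y ^ (2 * k))

lemma lamQ_nonneg (k : ℕ) {y : ℝ} (hy : 0 ≤ y) : 0 ≤ LamQ k y := by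
  unfold LamQ; positivity

lemma lamQ_le_pow (k : ℕ) {y : ℝ} (hy : 0 ≤ y) : LamQ k y ≤ 2 * k * y ^ k :=
  div_le_self (by positivity) (le_add_of_nonneg_right (by positivity))

lemma lamQ_le_inv_pow (k : ℕ) {y : ℝ} (hy : 0 < y) : LamQ k y ≤ 2 * k / y ^ k := by
  have hyk : 0 < y ^ k := pow_pos hy k
  calc LamQ k y ≤ 2 * k * y ^ k / (y ^ k) ^ 2 := by
        unfold LamQ
        rw [← pow_mul, mul_comm k 2]
        gcongr
        exact le_add_of_nonneg_left zero_le_one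
    _ = 2 * k / y ^ k := by field_simp

lemma setIntegral_Ioi_zero_le_of_le_rpow {f : ℝ → ℝ} {A B p q : ℝ} (hp : -1 < p) (hq : q < -1)
    (hf : ∀ s ∈ Ioi (0 : ℝ), 0 ≤ f s) (hf₀ : ∀ s ∈ Ioc (0 : ℝ) 1, f s ≤ A * s ^ p)
    (hf₁ : ∀ s ∈ Ioi (1 : ℝ), f s ≤ B * s ^ q) :
    ∫ s in Ioi 0, f s ≤ A / (p + 1) - B / (q + 1) := by
  let g : ℝ → ℝ := fun s => if s ≤ 1 then A * s ^ p else B * s ^ q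
  have hg₀ : EqOn g (fun s => A * s ^ p) (Ioc 0 1) := fun s hs => if_pos hs.2
  have hg₁ : EqOn g (fun s => B * s ^ q) (Ioi 1) := fun s hs => if_neg (not_le.2 hs)
  have hint₀ : IntegrableOn g (Ioc 0 1) := by
    refine (IntegrableOn.congr_fun ?_ hg₀.symm measurableSet_Ioc)
    exact ((intervalIntegrable_iff_integrableOn_Ioc_of_le zero_le_one).1
      (intervalIntegral.intervalIntegrable_rpow' hp)).const_mul A
  have hint₁ : IntegrableOn g (Ioi 1) :=
    IntegrableOn.congr_fun ((integrableOn_Ioi_rpow_of_lt hq zero_lt_one).const_mul B) hg₁.symm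
      measurableSet_Ioi
  have hsplit := Ioc_union_Ioi_eq_Ioi (zero_le_one (α := ℝ))
  calc ∫ s in Ioi 0, f s ≤ ∫ s in Ioi 0, g s := by
        refine integral_mono_of_nonneg ((ae_restrict_iff' measurableSet_Ioi).2 (ae_of_all _ hf))
          (hsplit ▸ hint₀.union hint₁) ((ae_restrict_iff' measurableSet_Ioi).2 (ae_of_all _ ?_))
        intro s hs
        rcases le_or_gt s 1 with h | h
        · exact (hf₀ s ⟨hs, h⟩).trans_eq (hg₀ ⟨hs, h⟩).symm
        · exact (hf₁ s h).trans_eq (hg₁ h).symm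
    _ = A / (p + 1) - B / (q + 1) := by
        rw [← hsplit, setIntegral_union Ioc_disjoint_Ioi_same measurableSet_Ioi hint₀ hint₁,
          setIntegral_congr_fun measurableSet_Ioc hg₀, setIntegral_congr_fun measurableSet_Ioi hg₁,
          integral_const_mul, integral_const_mul, ← intervalIntegral.integral_of_le zero_le_one,
          integral_rpow (Or.inl hp), integral_Ioi_rpow_of_lt hq zero_lt_one]
        simp only [Real.one_rpow, Real.zero_rpow (by linarith : p + 1 ≠ 0), sub_zero]
        ring

noncomputable def unitScaleIntegrand (k : ℕ) (t s : ℝ) : ℝ :=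
  (s + 1) ^ 2 * LamQ k s ^ 2 * LamQ k (t * s) ^ 2 / s ^ 5

lemma integral_eq_unitScaleIntegrand (k : ℕ) {a : ℝ} (ha : 0 < a) (b : ℝ) :
    ∫ r in Ioi (0 : ℝ), r ^ (-(6 : ℤ)) * ((r / a + 1) * (r + a)) *
        LamQ k (r / a) ^ 2 * LamQ k (r / b) ^ 2 * r =
      (a ^ 3)⁻¹ * ∫ s in Ioi (0 : ℝ), unitScaleIntegrand k (a / b) s := by
  have hscale := integral_comp_mul_left_Ioi (fun r => r ^ (-(6 : ℤ)) * ((r / a + 1) * (r + a)) *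
      LamQ k (r / a) ^ 2 * LamQ k (r / b) ^ 2 * r) 0 ha
  have hpoint : ∀ s ∈ Ioi (0 : ℝ), (a * s) ^ (-(6 : ℤ)) * ((a * s / a + 1) * (a * s + a)) *
      LamQ k (a * s / a) ^ 2 * LamQ k (a * s / b) ^ 2 * (a * s) =
      (a ^ 4)⁻¹ * unitScaleIntegrand k (a / b) s := by
    intro s hs
    have hs : s ≠ 0 := ne_of_gt hs
    rw [mul_div_cancel_left₀ s ha.ne', mul_div_right_comm, unitScaleIntegrand, zpow_neg]
    field_simp
  rw [mul_zero, smul_eq_mul, setIntegral_congr_fun measurableSet_Ioi hpoint, integral_const_mul]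
    at hscale
  generalize ∫ s in Ioi (0 : ℝ), unitScaleIntegrand k (a / b) s = J at hscale ⊢
  generalize ∫ r in Ioi (0 : ℝ), r ^ (-(6 : ℤ)) * ((r / a + 1) * (r + a)) *
    LamQ k (r / a) ^ 2 * LamQ k (r / b) ^ 2 * r = I at hscale ⊢
  field_simp at hscale
  rw [hscale]
  field_simp

lemma unitScaleIntegrand_le_of_le_one (k : ℕ) {t s : ℝ} (ht : 0 ≤ t) (hs : s ∈ Ioc (0 : ℝ) 1) :
    unitScaleIntegrand k t s ≤ 64 * k ^ 4 * t ^ (2 * k) * s ^ (4 * (k : ℝ) - 5) := by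
  obtain ⟨hs₀, hs₁⟩ := hs
  calc unitScaleIntegrand k t s
      ≤ 2 ^ 2 * (2 * k * s ^ k) ^ 2 * (2 * k * (t * s) ^ k) ^ 2 / s ^ 5 := by
        unfold unitScaleIntegrand
        gcongr
        · linarith
        · exact lamQ_nonneg k hs₀.le
        · exact lamQ_le_pow k hs₀.le
        · exact lamQ_nonneg k (by positivity)
        · exact lamQ_le_pow k (by positivity)
    _ = 64 * k ^ 4 * t ^ (2 * k) * s ^ (4 * (k : ℝ) - 5) := by
        rw [Real.rpow_sub hs₀, show 4 * (k : ℝ) = ((4 * k : ℕ) : ℝ) by push_cast; ring,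
          show (5 : ℝ) = ((5 : ℕ) : ℝ) by norm_num, Real.rpow_natCast, Real.rpow_natCast]
        field_simp
        ring

lemma unitScaleIntegrand_le_of_one_lt (k : ℕ) {t s : ℝ} (ht : 0 ≤ t) (hs : 1 < s) :
    unitScaleIntegrand k t s ≤ 64 * k ^ 4 * t ^ (2 * k) * s ^ (-3 : ℝ) := by
  have hs₀ : 0 < s := one_pos.trans hs
  calc unitScaleIntegrand k t s
      ≤ (2 * s) ^ 2 * (2 * k / s ^ k) ^ 2 * (2 * k * (t * s) ^ k) ^ 2 / s ^ 5 := by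
        unfold unitScaleIntegrand
        gcongr
        · linarith
        · exact lamQ_nonneg k hs₀.le
        · exact lamQ_le_inv_pow k hs₀
        · exact lamQ_nonneg k (by positivity)
        · exact lamQ_le_pow k (by positivity)
    _ = 64 * k ^ 4 * t ^ (2 * k) * s ^ (-3 : ℝ) := by
        rw [show (-3 : ℝ) = -((3 : ℕ) : ℝ) by norm_num, Real.rpow_neg hs₀.le, Real.rpow_natCast]
        field_simp
        ring

lemma integral_unitScaleIntegrand_le (k : ℕ) (hk : 2 ≤ k) {t : ℝ} (ht : 0 ≤ t) :
    ∫ s in Ioi (0 : ℝ), unitScaleIntegrand k t s ≤ (8 * k ^ 2 * t ^ k) ^ 2 := by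
  have hk' : (2 : ℝ) ≤ k := by exact_mod_cast hk
  refine (setIntegral_Ioi_zero_le_of_le_rpow (p := 4 * (k : ℝ) - 5) (q := -3) (by linarith)
    (by norm_num) (fun s hs => ?_) (fun s hs => unitScaleIntegrand_le_of_le_one k ht hs)
    (fun s hs => unitScaleIntegrand_le_of_one_lt k ht hs)).trans ?_
  · have : 0 < s := hs
    unfold unitScaleIntegrand
    positivity
  · have h4 : 1 / (4 * (k : ℝ) - 5 + 1) ≤ 1 / 2 := by
      gcongr; linarith
    calc 64 * (k : ℝ) ^ 4 * t ^ (2 * k) / (4 * k - 5 + 1) - 64 * k ^ 4 * t ^ (2 * k) / (-3 + 1)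
        = 64 * (k : ℝ) ^ 4 * t ^ (2 * k) * (1 / (4 * k - 5 + 1) + 1 / 2) := by ring
      _ ≤ 64 * (k : ℝ) ^ 4 * t ^ (2 * k) * 1 := by gcongr; linarith
      _ = (8 * k ^ 2 * t ^ k) ^ 2 := by ring

/-- Weighted `L²(r dr)` estimate dual to the Morawetz norm: for `k ≥ 2` there exists
`C = C(k) > 0` such that for all `0 < λ_in ≤ λ_out`,
`‖r^{-3} √((r/λ_in + 1)(r + λ_in)) ΛQ(r/λ_in) ΛQ(r/λ_out)‖_{L²(r dr)}
  ≤ C λ_in^{-3/2} (λ_in/λ_out)^k`. -/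
theorem stmt_9 (k : ℕ) (hk : 2 ≤ k) :
    ∃ C > (0 : ℝ), ∀ lin lout : ℝ, 0 < lin → lin ≤ lout →
      Real.sqrt (∫ r in Set.Ioi (0 : ℝ),
          r ^ (-(6 : ℤ)) * ((r / lin + 1) * (r + lin)) *
            (LamQ k (r / lin)) ^ 2 * (LamQ k (r / lout)) ^ 2 * r)
        ≤ C * lin ^ (-(3 : ℝ) / 2) * (lin / lout) ^ k := by
  refine ⟨8 * k ^ 2, by positivity, fun a b ha hab => ?_⟩
  have ht : 0 ≤ a / b := div_nonneg ha.le (ha.trans_le hab).le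
  have hpow : (a ^ 3)⁻¹ = (a ^ (-(3 : ℝ) / 2)) ^ 2 := by
    rw [← Real.rpow_natCast _ 2, ← Real.rpow_mul ha.le,
      show -(3 : ℝ) / 2 * ((2 : ℕ) : ℝ) = -((3 : ℕ) : ℝ) by norm_num, Real.rpow_neg ha.le,
      Real.rpow_natCast]
  rw [integral_eq_unitScaleIntegrand k ha, ← Real.sqrt_sq (by positivity :
    0 ≤ 8 * (k : ℝ) ^ 2 * a ^ (-(3 : ℝ) / 2) * (a / b) ^ k)]
  refine Real.sqrt_le_sqrt ?_
  calc (a ^ 3)⁻¹ * ∫ s in Ioi (0 : ℝ), unitScaleIntegrand k (a / b) s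
      ≤ (a ^ (-(3 : ℝ) / 2)) ^ 2 * (8 * k ^ 2 * (a / b) ^ k) ^ 2 := by
        rw [← hpow]; gcongr; exact integral_unitScaleIntegrand_le k hk ht
    _ = (8 * k ^ 2 * a ^ (-(3 : ℝ) / 2) * (a / b) ^ k) ^ 2 := by ring
end

section
/- Let k ≥ 2 and J ≥ 1 be integers, and let ℓ be a real number with −k + 1 < ℓ < k − 1. There exists a constant C > 0, depending only on k, J and ℓ, such that for all scales λ_1 ≥ λ_2 ≥ … ≥ λ_J > 0 and every index i ∈ {1, …, J}: Σ_{j ≠ i} [ (1/(λ_i·λ_j))·∫_0^∞ ΛQ(r/λ_i)·ΛQ(r/λ_j)·r dr ]·λ_j^ℓ ≤ C·[ 1_{i ≤ J−1}·(λ_{i+1}/λ_i)^{k−1+ℓ} + 1_{i ≥ 2}·(λ_i/λ_{i−1})^{k−1−ℓ} ]·λ_i^ℓ. -/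
/-!
Writing `r = a s`, the bound `ΛQ(r/b) ≤ 2k (b/r)^k` gives
`ΛQ(r/a) ΛQ(r/b) r ≤ 4k² (b/a)^k a · s/(1 + s^{2k})`, and `s/(1 + s^{2k})` is integrable on
`(0, ∞)` because `2k > 2`. Hence the normalized interaction of the bubbles at scales `a ≥ b` is
`O((b/a)^{k-1})`. Multiplying by `λ_j^ℓ` turns this into `(λ_j/λ_i)^{k-1+ℓ} λ_i^ℓ` for `j > i` and
`(λ_i/λ_j)^{k-1-ℓ} λ_i^ℓ` for `j < i`; both exponents are positive, so by monotonicity of the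
scales each term is dominated by the one of the neighbouring bubble.
-/

open MeasureTheory

open Set

lemma integrableOn_div_one_add_pow_Ioi {n : ℕ} (hn : 2 < n) :
    IntegrableOn (fun s : ℝ => s / (1 + s ^ n)) (Ioi 0) := by
  have hden : ∀ s : ℝ, 0 ≤ s → 0 < 1 + s ^ n := fun s hs => by positivity
  have hcont : ContinuousOn (fun s : ℝ => s / (1 + s ^ n)) (Ici 0) :=
    continuousOn_id.div (by fun_prop) fun s hs => (hden s hs).ne'
  have htail : IntegrableOn (fun s : ℝ => s ^ (1 - n : ℝ)) (Ioi 1) :=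
    integrableOn_Ioi_rpow_of_lt (by linarith [(show (2 : ℝ) < n by exact_mod_cast hn)]) one_pos
  rw [← Ioc_union_Ioi_eq_Ioi zero_le_one]
  refine ((hcont.mono Icc_subset_Ici_self).integrableOn_Icc.mono_set Ioc_subset_Icc_self).union ?_
  refine htail.mono' ((hcont.mono (Ioi_subset_Ici zero_le_one)).aestronglyMeasurable
    measurableSet_Ioi) ?_
  filter_upwards [ae_restrict_mem measurableSet_Ioi] with s (hs : 1 < s)
  have hs0 : 0 < s := one_pos.trans hs
  rw [Real.norm_of_nonneg (div_nonneg hs0.le (hden s hs0.le).le), Real.rpow_sub hs0,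
    Real.rpow_one, Real.rpow_natCast]
  exact div_le_div_of_nonneg_left hs0.le (by positivity) (by linarith)

lemma integral_div_one_add_pow_pos {n : ℕ} (hn : 2 < n) :
    0 < ∫ s in Ioi (0 : ℝ), s / (1 + s ^ n) := by
  rw [setIntegral_pos_iff_support_of_nonneg_ae _ (integrableOn_div_one_add_pow_Ioi hn)]
  · have hsupp : Ioi (0 : ℝ) ⊆ Function.support (fun s : ℝ => s / (1 + s ^ n)) ∩ Ioi 0 :=
      fun s (hs : 0 < s) => ⟨(div_pos hs (by positivity)).ne', hs⟩
    exact (by simp : 0 < volume (Ioi (0 : ℝ))).trans_le (measure_mono hsupp)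
  · filter_upwards [ae_restrict_mem measurableSet_Ioi] with s (hs : 0 < s)
    positivity

namespace LamQ

variable {k : ℕ}

lemma nonneg {y : ℝ} (hy : 0 ≤ y) : 0 ≤ LamQ k y := by
  unfold LamQ; positivity

lemma le_div_pow {y : ℝ} (hy : 0 < y) : LamQ k y ≤ 2 * k / y ^ k := by
  unfold LamQ
  rw [div_le_div_iff₀ (by positivity) (by positivity), pow_mul']
  nlinarith [pow_pos hy k, sq_nonneg (y ^ k), (by positivity : (0 : ℝ) ≤ 2 * k)]

lemma mul_LamQ_mul_le {a b r : ℝ} (ha : 0 < a) (hb : 0 < b) (hr : 0 < r) :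
    LamQ k (r / a) * LamQ k (r / b) * r
      ≤ 4 * k ^ 2 * (b / a) ^ k * a * ((r / a) / (1 + (r / a) ^ (2 * k))) := by
  calc LamQ k (r / a) * LamQ k (r / b) * r
      ≤ LamQ k (r / a) * (2 * k / (r / b) ^ k) * r := by
        gcongr
        · exact nonneg (by positivity)
        · exact le_div_pow (by positivity)
    _ = _ := by unfold LamQ; simp only [div_pow]; field_simp; ring

lemma integral_mul_LamQ_le (hk : 2 ≤ k) {a b : ℝ} (ha : 0 < a) (hb : 0 < b) :
    ∫ r in Ioi (0 : ℝ), LamQ k (r / a) * LamQ k (r / b) * r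
      ≤ 4 * k ^ 2 * (b / a) ^ k * a ^ 2 * ∫ s in Ioi (0 : ℝ), s / (1 + s ^ (2 * k)) := by
  set g : ℝ → ℝ := fun s => s / (1 + s ^ (2 * k))
  have hg : IntegrableOn g (Ioi 0) := integrableOn_div_one_add_pow_Ioi (by omega)
  have hg_div : IntegrableOn (fun r => g (r / a)) (Ioi 0) := by
    simp_rw [div_eq_inv_mul]
    exact (integrableOn_Ioi_comp_mul_left_iff g 0 (inv_pos.2 ha)).2 (by simpa using hg)
  calc ∫ r in Ioi (0 : ℝ), LamQ k (r / a) * LamQ k (r / b) * r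
      ≤ ∫ r in Ioi (0 : ℝ), 4 * k ^ 2 * (b / a) ^ k * a * g (r / a) := by
        refine integral_mono_of_nonneg ?_ (hg_div.const_mul _) ?_ <;>
          filter_upwards [ae_restrict_mem measurableSet_Ioi] with r (hr : 0 < r)
        · have := nonneg (k := k) (div_pos hr ha).le
          have := nonneg (k := k) (div_pos hr hb).le
          positivity
        · exact mul_LamQ_mul_le ha hb hr
    _ = 4 * k ^ 2 * (b / a) ^ k * a * (a * ∫ s in Ioi (0 : ℝ), g s) := by
        simp_rw [integral_const_mul, div_eq_inv_mul,
          integral_comp_mul_left_Ioi g 0 (inv_pos.2 ha)]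
        simp
    _ = _ := by ring

end LamQ

noncomputable def bubbleInteraction (k : ℕ) (a b : ℝ) : ℝ :=
  1 / (a * b) * ∫ r in Ioi (0 : ℝ), LamQ k (r / a) * LamQ k (r / b) * r

noncomputable def bubbleInteractionConst (k : ℕ) : ℝ :=
  4 * k ^ 2 * ∫ s in Ioi (0 : ℝ), s / (1 + s ^ (2 * k))

lemma bubbleInteractionConst_pos {k : ℕ} (hk : 2 ≤ k) : 0 < bubbleInteractionConst k := by
  have := integral_div_one_add_pow_pos (n := 2 * k) (by omega)
  have : (0 : ℝ) < k := by positivity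
  unfold bubbleInteractionConst
  positivity

section bubbleInteraction

variable {k : ℕ} {a b c ℓ : ℝ}

lemma bubbleInteraction_comm (a b : ℝ) : bubbleInteraction k a b = bubbleInteraction k b a := by
  unfold bubbleInteraction
  rw [mul_comm a b]
  congr 2 with r
  ring

lemma bubbleInteraction_le (hk : 2 ≤ k) (ha : 0 < a) (hb : 0 < b) :
    bubbleInteraction k a b ≤ bubbleInteractionConst k * (b / a) ^ ((k : ℝ) - 1) := by
  unfold bubbleInteraction bubbleInteractionConst
  calc 1 / (a * b) * ∫ r in Ioi (0 : ℝ), LamQ k (r / a) * LamQ k (r / b) * r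
      ≤ 1 / (a * b) * (4 * k ^ 2 * (b / a) ^ k * a ^ 2 *
          ∫ s in Ioi (0 : ℝ), s / (1 + s ^ (2 * k))) := by
        gcongr
        exact LamQ.integral_mul_LamQ_le hk ha hb
    _ = _ := by
        rw [Real.rpow_sub_one (div_pos hb ha).ne', Real.rpow_natCast]
        field_simp

lemma bubbleInteraction_mul_rpow_le_of_le (hk : 2 ≤ k) (ha : 0 < a) (hb : 0 < b) (hbc : b ≤ c)
    (hℓ : 0 ≤ (k : ℝ) - 1 + ℓ) :
    bubbleInteraction k a b * b ^ ℓ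
      ≤ bubbleInteractionConst k * (c / a) ^ ((k : ℝ) - 1 + ℓ) * a ^ ℓ := by
  have := bubbleInteractionConst_pos hk
  calc bubbleInteraction k a b * b ^ ℓ
      ≤ bubbleInteractionConst k * (b / a) ^ ((k : ℝ) - 1) * b ^ ℓ := by
        gcongr
        exact bubbleInteraction_le hk ha hb
    _ = bubbleInteractionConst k * (b / a) ^ ((k : ℝ) - 1 + ℓ) * a ^ ℓ := by
        rw [Real.rpow_add (div_pos hb ha), Real.div_rpow hb.le ha.le ℓ]
        field_simp
    _ ≤ _ := by gcongr

lemma bubbleInteraction_mul_rpow_le_of_ge (hk : 2 ≤ k) (ha : 0 < a) (hc : 0 < c) (hcb : c ≤ b)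
    (hℓ : 0 ≤ (k : ℝ) - 1 - ℓ) :
    bubbleInteraction k a b * b ^ ℓ
      ≤ bubbleInteractionConst k * (a / c) ^ ((k : ℝ) - 1 - ℓ) * a ^ ℓ := by
  have := bubbleInteractionConst_pos hk
  have hb : 0 < b := hc.trans_le hcb
  calc bubbleInteraction k a b * b ^ ℓ
      ≤ bubbleInteractionConst k * (a / b) ^ ((k : ℝ) - 1) * b ^ ℓ := by
        rw [bubbleInteraction_comm]
        gcongr
        exact bubbleInteraction_le hk hb ha
    _ = bubbleInteractionConst k * (a / b) ^ ((k : ℝ) - 1 - ℓ) * a ^ ℓ := by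
        rw [Real.rpow_sub (div_pos ha hb) ((k : ℝ) - 1) ℓ, Real.div_rpow ha.le hb.le ℓ]
        field_simp
    _ ≤ _ := by gcongr

end bubbleInteraction

noncomputable def adjacentScaleRatios (k : ℕ) (ℓ : ℝ) (J : ℕ) (lam : ℕ → ℝ) (i : ℕ) : ℝ :=
  (if i + 1 ≤ J then (lam (i + 1) / lam i) ^ ((k : ℝ) - 1 + ℓ) else 0)
    + (if 2 ≤ i then (lam i / lam (i - 1)) ^ ((k : ℝ) - 1 - ℓ) else 0)

section scales

variable {k J : ℕ} {ℓ : ℝ} {lam : ℕ → ℝ}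

lemma adjacentScaleRatios_nonneg (hpos : ∀ j, 1 ≤ j → j ≤ J → 0 < lam j) {i : ℕ} (hi1 : 1 ≤ i)
    (hiJ : i ≤ J) : 0 ≤ adjacentScaleRatios k ℓ J lam i := by
  have := hpos i hi1 hiJ
  unfold adjacentScaleRatios
  split_ifs with hnext hprev hprev
  · have := hpos (i + 1) (by omega) hnext
    have := hpos (i - 1) (by omega) (by omega)
    positivity
  · have := hpos (i + 1) (by omega) hnext
    positivity
  · have := hpos (i - 1) (by omega) (by omega)
    positivity
  · simp

lemma bubbleInteraction_mul_rpow_le_adjacentScaleRatios (hk : 2 ≤ k) (hℓ1 : -(k : ℝ) + 1 < ℓ)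
    (hℓ2 : ℓ < (k : ℝ) - 1) (hpos : ∀ j, 1 ≤ j → j ≤ J → 0 < lam j)
    (hanti : AntitoneOn lam (Icc 1 J)) {i j : ℕ} (hi : i ∈ Icc 1 J) (hj : j ∈ Icc 1 J)
    (hji : j ≠ i) :
    bubbleInteraction k (lam i) (lam j) * lam j ^ ℓ
      ≤ bubbleInteractionConst k * adjacentScaleRatios k ℓ J lam i * lam i ^ ℓ := by
  obtain ⟨hi1, hiJ⟩ := hi
  obtain ⟨hj1, hjJ⟩ := id hj
  have := bubbleInteractionConst_pos hk
  have := hpos i hi1 hiJ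
  rcases hji.lt_or_gt with hji | hij
  · have hprev : i - 1 ∈ Icc 1 J := ⟨by omega, by omega⟩
    calc bubbleInteraction k (lam i) (lam j) * lam j ^ ℓ
        ≤ bubbleInteractionConst k * (lam i / lam (i - 1)) ^ ((k : ℝ) - 1 - ℓ) * lam i ^ ℓ :=
          bubbleInteraction_mul_rpow_le_of_ge hk (hpos i hi1 hiJ) (hpos _ hprev.1 hprev.2)
            (hanti hj hprev (by omega)) (by linarith)
      _ ≤ _ := by
          gcongr
          rw [adjacentScaleRatios, if_pos (by omega : 2 ≤ i)]
          refine le_add_of_nonneg_left ?_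
          split_ifs with hnext
          · have := hpos (i + 1) (by omega) hnext
            positivity
          · exact le_rfl
  · have hnext : i + 1 ∈ Icc 1 J := ⟨by omega, by omega⟩
    calc bubbleInteraction k (lam i) (lam j) * lam j ^ ℓ
        ≤ bubbleInteractionConst k * (lam (i + 1) / lam i) ^ ((k : ℝ) - 1 + ℓ) * lam i ^ ℓ :=
          bubbleInteraction_mul_rpow_le_of_le hk (hpos i hi1 hiJ) (hpos j hj1 hjJ)
            (hanti hnext hj (by omega)) (by linarith)
      _ ≤ _ := by
          gcongr
          rw [adjacentScaleRatios, if_pos (by omega : i + 1 ≤ J)]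
          refine le_add_of_nonneg_right ?_
          split_ifs with hprev
          · have := hpos (i - 1) (by omega) (by omega)
            positivity
          · exact le_rfl

end scales

/-- Mapping property for multi-bubble interactions: for `k ≥ 2`, `J ≥ 1`, and
`-k+1 < ℓ < k-1`, there exists `C = C(k,J,ℓ) > 0` such that for all scales
`λ_1 ≥ … ≥ λ_J > 0` and every `i ∈ {1,…,J}`,
`Σ_{j ≠ i} ‖ΛQ_{;i,normalized} ΛQ_{;j,normalized}‖_{L¹(r dr)} λ_j^ℓ
  ≤ C (1_{i ≤ J-1} (λ_{i+1}/λ_i)^{k-1+ℓ} + 1_{i ≥ 2} (λ_i/λ_{i-1})^{k-1-ℓ}) λ_i^ℓ`. -/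
theorem stmt_19 (k J : ℕ) (hk : 2 ≤ k) (hJ : 1 ≤ J) (ℓ : ℝ)
    (hℓ1 : -(k : ℝ) + 1 < ℓ) (hℓ2 : ℓ < (k : ℝ) - 1) :
    ∃ C > (0 : ℝ), ∀ lam : ℕ → ℝ,
      (∀ j, 1 ≤ j → j ≤ J → 0 < lam j) →
      (∀ j, 2 ≤ j → j ≤ J → lam j ≤ lam (j - 1)) →
      ∀ i, 1 ≤ i → i ≤ J →
      ∑ j ∈ (Finset.Icc 1 J).erase i,
          ((1 / (lam i * lam j)) *
              ∫ r in Set.Ioi (0 : ℝ), LamQ k (r / lam i) * LamQ k (r / lam j) * r) *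
            lam j ^ ℓ
        ≤ C * ((if i + 1 ≤ J then (lam (i + 1) / lam i) ^ ((k : ℝ) - 1 + ℓ) else 0)
                + (if 2 ≤ i then (lam i / lam (i - 1)) ^ ((k : ℝ) - 1 - ℓ) else 0)) *
            lam i ^ ℓ := by
  have := bubbleInteractionConst_pos hk
  refine ⟨J * bubbleInteractionConst k, by positivity, fun lam hpos hdec i hi1 hiJ => ?_⟩
  have hanti : AntitoneOn lam (Icc 1 J) :=
    antitoneOn_of_succ_le ordConnected_Icc fun a _ ha hb => by
      rw [Order.succ_eq_add_one] at hb ⊢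
      simpa using hdec (a + 1) (by linarith [ha.1]) hb.2
  have := adjacentScaleRatios_nonneg (k := k) (ℓ := ℓ) hpos hi1 hiJ
  have := hpos i hi1 hiJ
  calc ∑ j ∈ (Finset.Icc 1 J).erase i, bubbleInteraction k (lam i) (lam j) * lam j ^ ℓ
      ≤ ∑ j ∈ (Finset.Icc 1 J).erase i,
          bubbleInteractionConst k * adjacentScaleRatios k ℓ J lam i * lam i ^ ℓ := by
        refine Finset.sum_le_sum fun j hj => ?_
        rw [Finset.mem_erase, Finset.mem_Icc] at hj
        exact bubbleInteraction_mul_rpow_le_adjacentScaleRatios hk hℓ1 hℓ2 hpos hanti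
          ⟨hi1, hiJ⟩ hj.2 hj.1
    _ ≤ J * (bubbleInteractionConst k * adjacentScaleRatios k ℓ J lam i * lam i ^ ℓ) := by
        rw [Finset.sum_const, nsmul_eq_mul]
        gcongr
        exact_mod_cast Finset.card_erase_le.trans (by simp)
    _ = _ := by unfold adjacentScaleRatios; ring
end
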